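/- For every prime p and positive integer n, B_{n+p^m} \equiv \sum_{k=1}^{n} (B_{p^m} + k) * S(n,k) (mod p), for any positive integer m. -/

import Mathlib

/-- Stirling numbers of the second kind. -/
def stirling : ℕ → ℕ → ℕ
  | 0, 0 => 1
  | 0, _ + 1 => 0
  | _ + 1, 0 => 0
  | n + 1, k + 1 => stirling n k + (k + 1) * stirling n (k + 1)

/-- The `n`-th Bell number. -/
def bell (n : ℕ) : ℕ := ∑ k ∈ Finset.range (n + 1), stirling n k

/-!
Let `L` be the linear functional on polynomials with `L (X ^ n) = B_n`. The recurrence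
`B_{n+1} = ∑ j, C(n, j) B_j` says exactly that `L (X * f) = L (f (X + 1))`, and iterating this along
the Stirling recurrence gives Spivey's identity `L (X ^ n * f) = ∑ k, S(n, k) L (f (X + k))`.
For `f = X ^ (p ^ m)` reduced mod `p`, Frobenius gives `(X + k) ^ (p ^ m) = X ^ (p ^ m) + k`, whence
`L ((X + k) ^ (p ^ m)) ≡ B_{p^m} + k`.
-/

open Finset Polynomial

theorem stirling_eq_stirlingSecond : stirling = Nat.stirlingSecond := by
  funext n k
  induction n generalizing k with
  | zero => cases k <;> rfl
  | succ n ih => cases k <;> simp [stirling, Nat.stirlingSecond_succ_succ, ih, add_comm]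

theorem bell_eq_sum_range {n N : ℕ} (h : n < N) :
    bell n = ∑ k ∈ range N, n.stirlingSecond k := by
  rw [bell, stirling_eq_stirlingSecond]
  refine sum_subset (range_subset_range.mpr h) fun k _ hkn => ?_
  exact Nat.stirlingSecond_eq_zero_of_lt (by simpa using hkn)

section
variable {M : Type*} [AddCommMonoid M]

theorem sum_range_comp_succ_of_eq_zero (n : ℕ) {φ : ℕ → M} (h₀ : φ 0 = 0)
    (hn : φ (n + 1) = 0) :
    ∑ k ∈ range (n + 1), φ (k + 1) = ∑ k ∈ range (n + 1), φ k := by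
  rw [← add_zero (∑ k ∈ range (n + 1), φ (k + 1)), ← h₀, ← sum_range_succ', sum_range_succ, hn,
    add_zero]

theorem sum_range_choose_succ_smul (n : ℕ) (g : ℕ → M) :
    ∑ j ∈ range (n + 2), (n + 1).choose j • g j =
      ∑ j ∈ range (n + 1), n.choose j • (g j + g (j + 1)) := by
  simp only [sum_range_succ' _ (n + 1), Nat.choose_succ_succ, add_smul, smul_add, sum_add_distrib]
  rw [sum_range_succ (fun j => n.choose (j + 1) • g (j + 1)),
    sum_range_succ' (fun j => n.choose j • g j)]
  simp only [Nat.choose_succ_self, zero_nsmul, add_zero, Nat.choose_zero_right, one_smul]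
  abel

theorem sum_range_stirlingSecond_succ_smul (n : ℕ) (h : ℕ → M) :
    ∑ k ∈ range (n + 2), (n + 1).stirlingSecond k • h k =
      ∑ k ∈ range (n + 1), n.stirlingSecond k • (h (k + 1) + k • h k) := by
  have hshift := sum_range_comp_succ_of_eq_zero n (φ := fun k => (k * n.stirlingSecond k) • h k)
    (by simp) (by simp [Nat.stirlingSecond_eq_zero_of_lt])
  rw [sum_range_succ', Nat.stirlingSecond_succ_zero, zero_smul, add_zero]
  simp only [Nat.stirlingSecond_succ_succ, add_smul, smul_add, sum_add_distrib, smul_smul]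
  rw [hshift, add_comm]
  simp only [mul_comm]

end

theorem stirlingSecond_succ_succ_eq_sum_choose (n k : ℕ) :
    (n + 1).stirlingSecond (k + 1) = ∑ j ∈ range (n + 1), n.choose j * j.stirlingSecond k := by
  induction n generalizing k with
  | zero => cases k <;> simp [Nat.stirlingSecond_succ_succ]
  | succ n ih =>
    have pascal := sum_range_choose_succ_smul n fun j => j.stirlingSecond k
    simp only [smul_eq_mul] at pascal
    rw [pascal]
    cases k with
    | zero => simp [Nat.stirlingSecond_one_right, ← ih]
    | succ k =>
      rw [Nat.stirlingSecond_succ_succ (n + 1), ih, ih, mul_sum, ← sum_add_distrib]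
      refine sum_congr rfl fun j _ => ?_
      rw [Nat.stirlingSecond_succ_succ]
      ring

theorem bell_succ (n : ℕ) : bell (n + 1) = ∑ j ∈ range (n + 1), n.choose j * bell j := by
  rw [bell_eq_sum_range (Nat.lt_succ_self _), sum_range_succ', Nat.stirlingSecond_succ_zero,
    add_zero]
  simp only [stirlingSecond_succ_succ_eq_sum_choose]
  rw [sum_comm]
  refine sum_congr rfl fun j hj => ?_
  rw [← mul_sum, ← bell_eq_sum_range (by simpa using hj)]

section
variable (R : Type*) [CommSemiring R]

noncomputable def bellFunctional : R[X] →ₗ[R] R :=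
  lsum fun n => LinearMap.mulRight R (bell n : R)

variable {R}

@[simp]
theorem bellFunctional_monomial (n : ℕ) (a : R) :
    bellFunctional R (monomial n a) = a * bell n := by
  simp [bellFunctional]

@[simp]
theorem bellFunctional_X_pow (n : ℕ) : bellFunctional R (X ^ n) = bell n := by
  simp [X_pow_eq_monomial]

@[simp]
theorem bellFunctional_C (a : R) : bellFunctional R (C a) = a := by
  simp [← monomial_zero_left, bell, stirling]

@[simp]
theorem bellFunctional_C_mul (a : R) (f : R[X]) :
    bellFunctional R (C a * f) = a * bellFunctional R f := by
  rw [C_mul', map_smul, smul_eq_mul]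

theorem bellFunctional_X_add_one_pow (n : ℕ) :
    bellFunctional R ((X + 1) ^ n) = ∑ j ∈ range (n + 1), (n.choose j : R) * bell j := by
  simp only [add_pow, one_pow, mul_one, map_sum]
  refine sum_congr rfl fun j _ => ?_
  rw [← C_eq_natCast, mul_comm, bellFunctional_C_mul, bellFunctional_X_pow]

theorem bellFunctional_X_mul (f : R[X]) :
    bellFunctional R (X * f) = bellFunctional R (f.comp (X + 1)) := by
  induction f using Polynomial.induction_on' with
  | add f g hf hg => simp only [mul_add, add_comp, map_add, hf, hg]
  | monomial n a => simp [X_mul_monomial, monomial_comp, bellFunctional_X_add_one_pow, bell_succ]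

theorem bellFunctional_X_pow_mul (n : ℕ) (f : R[X]) :
    bellFunctional R (X ^ n * f) =
      ∑ k ∈ range (n + 1), n.stirlingSecond k * bellFunctional R (f.comp (X + C (k : R))) := by
  induction n generalizing f with
  | zero => simp
  | succ n ih =>
    have hshift (k : ℕ) :
        (f.comp (X + C (k : R))).comp (X + 1) = f.comp (X + C ((k + 1 : ℕ) : R)) := by
      rw [comp_assoc, add_comp, X_comp, C_comp, Nat.cast_succ, C_add, C_1]
      congr 1
      ring
    have hrec := sum_range_stirlingSecond_succ_smul n fun k =>
      bellFunctional R (f.comp (X + C (k : R)))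
    simp only [nsmul_eq_mul] at hrec
    rw [pow_succ, mul_assoc, ih, hrec]
    refine sum_congr rfl fun k _ => ?_
    rw [mul_comp, X_comp, add_mul, map_add, bellFunctional_X_mul, hshift, bellFunctional_C_mul]

theorem bellFunctional_X_add_C_pow_char_pow {p : ℕ} [Fact p.Prime] [CharP R p] (m : ℕ) (a : R) :
    bellFunctional R ((X + C a) ^ p ^ m) = bell (p ^ m) + a ^ p ^ m := by
  rw [add_pow_char_pow, ← C_pow, map_add, bellFunctional_X_pow, bellFunctional_C]

end

theorem bell_add_prime_pow_sum_general (p n m : ℕ) (hp : p.Prime) (hn : 0 < n) :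
    bell (n + p ^ m) ≡ ∑ k ∈ Finset.Icc 1 n, (bell (p ^ m) + k) * stirling n k [MOD p] := by
  have : Fact p.Prime := ⟨hp⟩
  obtain ⟨n, rfl⟩ := Nat.exists_eq_add_one_of_ne_zero hn.ne'
  rw [← ZMod.natCast_eq_natCast_iff, ← bellFunctional_X_pow, pow_add, bellFunctional_X_pow_mul,
    Nat.range_succ_eq_Icc_zero, ← insert_Icc_add_one_left_eq_Icc (Nat.zero_le _),
    sum_insert (by simp), Nat.stirlingSecond_succ_zero, stirling_eq_stirlingSecond]
  push_cast
  simp only [X_pow_comp, bellFunctional_X_add_C_pow_char_pow, ZMod.pow_card_pow, zero_mul,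
    zero_add, mul_comm]

theorem bell_add_prime_pow_sum (p n m : ℕ) (hp : p.Prime) (hn : 0 < n) (hm : 0 < m) :
    bell (n + p ^ m) ≡ ∑ k ∈ Finset.Icc 1 n, (bell (p ^ m) + k) * stirling n k [MOD p] :=
  bell_add_prime_pow_sum_general p n m hp hn
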